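/- arXiv:1808.04837 — 2 statements merged into one kernel-verified Lean document; each statement's English description precedes it below -/
import Mathlib

section
/- For real α, β with −β < α < −β/2 (so β < 0 is impossible; assume β > 0), ∫₀^∞ x^{α−1} (√(1+x) − 1)^β dx = β · Γ(−β−2α) · Γ(α+β) · 2^{2α+β} / Γ(1−α). -/
/-!
Substitute `x = 4v/(1-v)^2`, i.e. `v = (√(1+x) - 1)/(√(1+x) + 1)`, which maps `(0,1)` onto `(0,∞)`
and turns `√(1+x) - 1` into `2v/(1-v)`. The integral becomes
`2^(2α+β) ∫₀¹ v^(a-1) (1-v)^(b-1) (1+v) dv` with `a = α + β`, `b = -β - 2α` (both positive), and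
`B(a,b) + B(a+1,b) = (2a+b) Γ(a) Γ(b) / Γ(a+b+1)` with `2a + b = β`, `a + b + 1 = 1 - α`.
-/

open Real MeasureTheory Set

lemma ofReal_cpow_mul_one_sub_cpow {x : ℝ} (hx₀ : 0 ≤ x) (hx₁ : x ≤ 1) (a b : ℝ) :
    (x : ℂ) ^ ((a : ℂ) - 1) * (1 - (x : ℂ)) ^ ((b : ℂ) - 1) =
      ((x ^ (a - 1) * (1 - x) ^ (b - 1) : ℝ) : ℂ) := by
  rw [Complex.ofReal_mul, Complex.ofReal_cpow hx₀, Complex.ofReal_cpow (sub_nonneg.2 hx₁)]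
  push_cast
  rfl

lemma integrableOn_rpow_mul_one_sub_rpow {a b : ℝ} (ha : 0 < a) (hb : 0 < b) :
    IntegrableOn (fun x : ℝ ↦ x ^ (a - 1) * (1 - x) ^ (b - 1)) (Ioo 0 1) := by
  have h := Complex.betaIntegral_convergent (u := a) (v := b) (by simpa) (by simpa)
  rw [intervalIntegrable_iff_integrableOn_Ioo_of_le zero_le_one] at h
  have hre := (h.congr_fun (fun x hx ↦ ofReal_cpow_mul_one_sub_cpow hx.1.le hx.2.le a b)
    measurableSet_Ioo).re
  simp only [RCLike.re_to_complex, Complex.ofReal_re] at hre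
  exact hre

lemma integral_rpow_mul_one_sub_rpow {a b : ℝ} (ha : 0 < a) (hb : 0 < b) :
    ∫ x in Ioo (0 : ℝ) 1, x ^ (a - 1) * (1 - x) ^ (b - 1) = Gamma a * Gamma b / Gamma (a + b) := by
  have h := Complex.betaIntegral_eq_Gamma_mul_div a b (by simpa) (by simpa)
  rw [Complex.betaIntegral, intervalIntegral.integral_of_le zero_le_one,
    integral_Ioc_eq_integral_Ioo, setIntegral_congr_fun measurableSet_Ioo
      (fun x hx ↦ ofReal_cpow_mul_one_sub_cpow hx.1.le hx.2.le a b), integral_complex_ofReal,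
    ← Complex.ofReal_add, Complex.Gamma_ofReal, Complex.Gamma_ofReal, Complex.Gamma_ofReal] at h
  exact_mod_cast h

lemma integral_rpow_mul_one_sub_rpow_mul_one_add {a b : ℝ} (ha : 0 < a) (hb : 0 < b) :
    ∫ x in Ioo (0 : ℝ) 1, x ^ (a - 1) * (1 - x) ^ (b - 1) * (1 + x) =
      (2 * a + b) * Gamma a * Gamma b / Gamma (a + b + 1) := by
  have hsplit : ∀ x ∈ Ioo (0 : ℝ) 1, x ^ (a - 1) * (1 - x) ^ (b - 1) * (1 + x) =
      x ^ (a - 1) * (1 - x) ^ (b - 1) + x ^ (a + 1 - 1) * (1 - x) ^ (b - 1) := fun x hx ↦ by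
    rw [add_sub_cancel_right, ← sub_add_cancel a 1, rpow_add_one hx.1.ne', add_sub_cancel_right]
    ring
  rw [setIntegral_congr_fun measurableSet_Ioo hsplit,
    integral_add (integrableOn_rpow_mul_one_sub_rpow ha hb)
      (integrableOn_rpow_mul_one_sub_rpow (by linarith) hb),
    integral_rpow_mul_one_sub_rpow ha hb, integral_rpow_mul_one_sub_rpow (by linarith) hb,
    add_right_comm, Gamma_add_one ha.ne', Gamma_add_one (by positivity)]
  have := (Gamma_pos_of_pos (add_pos ha hb)).ne'
  field_simp
  ring

lemma sqrt_one_add_four_mul_div_one_sub_sq {v : ℝ} (hv₀ : -1 ≤ v) (hv₁ : v < 1) :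
    √(1 + 4 * v / (1 - v) ^ 2) = (1 + v) / (1 - v) := by
  have : 0 < 1 - v := by linarith
  rw [show 1 + 4 * v / (1 - v) ^ 2 = ((1 + v) / (1 - v)) ^ 2 by field_simp; ring,
    sqrt_sq (div_nonneg (by linarith) this.le)]

lemma bijOn_four_mul_div_one_sub_sq :
    BijOn (fun v : ℝ ↦ 4 * v / (1 - v) ^ 2) (Ioo 0 1) (Ioi 0) := by
  refine InvOn.bijOn (f' := fun x ↦ (√(1 + x) - 1) / (√(1 + x) + 1)) ⟨fun v hv ↦ ?_, fun x hx ↦ ?_⟩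
    (fun v hv ↦ ?_) (fun x hx ↦ ?_)
  · have : 0 < 1 - v := by linarith [hv.2]
    simp only [sqrt_one_add_four_mul_div_one_sub_sq (by linarith [hv.1]) hv.2]
    field_simp
    ring
  · have hs : √(1 + x) ^ 2 = 1 + x := sq_sqrt (by linarith [mem_Ioi.1 hx])
    have : 0 < √(1 + x) + 1 := by positivity
    dsimp only
    field_simp
    linear_combination 4 * hs
  · have : 0 < 1 - v := by linarith [hv.2]
    exact div_pos (by linarith [hv.1]) (pow_pos this 2)
  · have : 1 < √(1 + x) := by
      rw [lt_sqrt zero_le_one]; linarith [mem_Ioi.1 hx]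
    exact ⟨div_pos (by linarith) (by linarith), (div_lt_one (by linarith)).2 (by linarith)⟩

lemma hasDerivAt_four_mul_div_one_sub_sq {v : ℝ} (hv : v ≠ 1) :
    HasDerivAt (fun v : ℝ ↦ 4 * v / (1 - v) ^ 2) (4 * (1 + v) / (1 - v) ^ 3) v := by
  have : 1 - v ≠ 0 := sub_ne_zero.2 hv.symm
  refine (((hasDerivAt_id' v).const_mul 4).fun_div (((hasDerivAt_id' v).const_sub 1).fun_pow 2)
    (pow_ne_zero 2 this)).congr_deriv ?_
  field_simp
  ring

lemma mul_div_pow_rpow {c x y : ℝ} (hc : 0 ≤ c) (hx : 0 ≤ x) (hy : 0 ≤ y) (n : ℕ) (s : ℝ) :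
    (c ^ n * x / y ^ n) ^ s = c ^ (n * s) * x ^ s / y ^ (n * s) := by
  rw [div_rpow (by positivity) (by positivity), mul_rpow (by positivity) hx,
    ← rpow_natCast, ← rpow_natCast, ← rpow_mul hc, ← rpow_mul hy]

lemma abs_deriv_mul_comp_four_mul_div_one_sub_sq {α β v : ℝ} (hv₀ : 0 < v) (hv₁ : v < 1) :
    |4 * (1 + v) / (1 - v) ^ 3| * ((4 * v / (1 - v) ^ 2) ^ (α - 1) *
      (√(1 + 4 * v / (1 - v) ^ 2) - 1) ^ β) =
      2 ^ (2 * α + β) * (v ^ ((α + β) - 1) * (1 - v) ^ ((-β - 2 * α) - 1) * (1 + v)) := by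
  have hw : 0 < 1 - v := by linarith
  rw [sqrt_one_add_four_mul_div_one_sub_sq (by linarith) hv₁,
    show (1 + v) / (1 - v) - 1 = 2 ^ 1 * v / (1 - v) ^ 1 by field_simp; ring,
    show 4 * v / (1 - v) ^ 2 = 2 ^ 2 * v / (1 - v) ^ 2 by norm_num,
    mul_div_pow_rpow zero_le_two hv₀.le hw.le, mul_div_pow_rpow zero_le_two hv₀.le hw.le,
    abs_of_pos (by positivity),
    show (2 : ℝ) * α + β = (2 : ℕ) + (2 : ℕ) * (α - 1) + (1 : ℕ) * β by push_cast; ring,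
    show α + β - 1 = (α - 1) + β by ring,
    show -β - 2 * α - 1 = -((3 : ℕ) + (2 : ℕ) * (α - 1) + (1 : ℕ) * β) by push_cast; ring,
    rpow_neg hw.le, rpow_add two_pos, rpow_add two_pos, rpow_add hv₀, rpow_add hw, rpow_add hw,
    rpow_natCast, rpow_natCast]
  field_simp
  ring

theorem stmt_5_general (α β : ℝ) (h1 : -β < α) (h2 : α < -β / 2) :
    ∫ x in Set.Ioi (0 : ℝ), x ^ (α - 1) * (Real.sqrt (1 + x) - 1) ^ β =
      β * Real.Gamma (-β - 2 * α) * Real.Gamma (α + β) * 2 ^ (2 * α + β) / Real.Gamma (1 - α) := by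
  have ha : 0 < α + β := by linarith
  have hb : 0 < -β - 2 * α := by linarith
  rw [← bijOn_four_mul_div_one_sub_sq.image_eq,
    integral_image_eq_integral_abs_deriv_smul measurableSet_Ioo
      (fun v hv ↦ (hasDerivAt_four_mul_div_one_sub_sq hv.2.ne).hasDerivWithinAt)
      bijOn_four_mul_div_one_sub_sq.injOn]
  simp_rw [smul_eq_mul]
  rw [setIntegral_congr_fun measurableSet_Ioo
      (fun v hv ↦ abs_deriv_mul_comp_four_mul_div_one_sub_sq hv.1 hv.2),
    integral_const_mul, integral_rpow_mul_one_sub_rpow_mul_one_add ha hb,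
    show α + β + (-β - 2 * α) + 1 = 1 - α by ring, show 2 * (α + β) + (-β - 2 * α) = β by ring]
  ring

theorem stmt_5 (α β : ℝ) (hβ : 0 < β) (h1 : -β < α) (h2 : α < -β / 2) :
    ∫ x in Set.Ioi (0 : ℝ), x ^ (α - 1) * (Real.sqrt (1 + x) - 1) ^ β =
      β * Real.Gamma (-β - 2 * α) * Real.Gamma (α + β) * 2 ^ (2 * α + β) / Real.Gamma (1 - α) :=
  stmt_5_general α β h1 h2
end

section
/- For real a, b with a+b+1/2 not a non-positive integer and |x| < 1: (₂F₁(a, b; a+b+1/2; x))² = ₃F₂(2a, a+b, 2b; a+b+1/2, 2a+2b; x), i.e., (Σ_{k≥0} (a)_k(b)_k/((a+b+1/2)_k k!) x^k)² = Σ_{k≥0} (2a)_k(a+b)_k(2b)_k/((a+b+1/2)_k(2a+2b)_k k!) x^k. -/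
/-!
Let `F k` be the coefficients of `₂F₁(a, b; c; x)` with `2c = 2a + 2b + 1`, so that
`(c + k)(k + 1) F (k + 1) = (a + k)(b + k) F k`. Writing `n = k + m`, the polynomial identity
`(2a + n)(a + b + n)(2b + n) = (a + k)(b + k)(2a + 2b + k + 3m) + (a + m)(b + m)(2a + 2b + 3k + m)`
together with this recurrence turns each term of `(2a + n)(a + b + n)(2b + n) ∑_{k+m=n} F k F m`
into a telescoping difference plus a multiple of a term of `∑_{k+m=n+1} F k F m` (Zeilberger's
creative telescoping). Hence the coefficients of the Cauchy square of the ₂F₁ series satisfy the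
first-order recurrence of the ₃F₂ coefficients; both sequences start at `1`, so they agree. For
`|x| < 1` the ₂F₁ series converges absolutely, so the Cauchy product formula applies.
-/

open Finset Polynomial

section Telescoping

variable {R : Type*} [CommRing R]

theorem clausen_polynomial_identity (a b k m : R) :
    (2 * a + (k + m)) * (a + b + (k + m)) * (2 * b + (k + m)) =
      (a + k) * (b + k) * (2 * a + 2 * b + k + 3 * m) +
        (a + m) * (b + m) * (2 * a + 2 * b + 3 * k + m) := by
  ring

def clausenCertificate (a b c : R) (F : ℕ → R) (j l : ℕ) : R :=
  j * (c + j - 1) * (2 * a + 2 * b + j + 3 * l - 1) * F j * F l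

variable {a b c : R} {F : ℕ → R}

theorem clausen_step (hc : 2 * c = 2 * a + 2 * b + 1)
    (hF : ∀ k : ℕ, (c + k) * (k + 1) * F (k + 1) = (a + k) * (b + k) * F k) (k m : ℕ) :
    (2 * a + (k + m)) * (a + b + (k + m)) * (2 * b + (k + m)) * (F k * F m) =
      clausenCertificate a b c F (k + 1) m - clausenCertificate a b c F k (m + 1) +
        (c + (k + m)) * (2 * a + 2 * b + (k + m)) * ((k + m) + 1) * (F k * F (m + 1)) := by
  rw [clausen_polynomial_identity]
  unfold clausenCertificate
  push_cast
  linear_combination -(2 * a + 2 * b + k + 3 * m) * F m * hF k -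
    (2 * a + 2 * b + 3 * k + m) * F k * hF m + 2 * k * (m + 1) * F k * F (m + 1) * hc

theorem clausen_convolution_recurrence (hc : 2 * c = 2 * a + 2 * b + 1)
    (hF : ∀ k : ℕ, (c + k) * (k + 1) * F (k + 1) = (a + k) * (b + k) * F k) (n : ℕ) :
    (c + n) * (2 * a + 2 * b + n) * (n + 1) * ∑ k ∈ range (n + 2), F k * F (n + 1 - k) =
      (2 * a + n) * (a + b + n) * (2 * b + n) * ∑ k ∈ range (n + 1), F k * F (n - k) := by
  set G : ℕ → R := fun k => clausenCertificate a b c F k (n + 1 - k)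
  have hstep : ∀ k ∈ range (n + 1),
      (2 * a + n) * (a + b + n) * (2 * b + n) * (F k * F (n - k)) =
        G (k + 1) - G k + (c + n) * (2 * a + 2 * b + n) * (n + 1) * (F k * F (n + 1 - k)) := by
    intro k hk
    obtain ⟨m, rfl⟩ := Nat.exists_eq_add_of_le (Nat.lt_succ_iff.mp (mem_range.mp hk))
    have h₁ : k + m + 1 - (k + 1) = m := by omega
    have h₂ : k + m + 1 - k = m + 1 := by omega
    simp only [G, h₁, h₂, Nat.add_sub_cancel_left, Nat.cast_add]
    exact clausen_step hc hF k m
  have hG₀ : G 0 = 0 := by simp [G, clausenCertificate]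
  have hG : G (n + 1) = (c + n) * (2 * a + 2 * b + n) * (n + 1) * (F (n + 1) * F 0) := by
    simp only [G, clausenCertificate, Nat.sub_self]
    push_cast
    ring
  have hsum := sum_congr rfl hstep
  rw [← mul_sum, sum_add_distrib, sum_range_sub G, hG₀, hG, ← mul_sum] at hsum
  rw [hsum, sum_range_succ _ (n + 1), Nat.sub_self]
  ring

end Telescoping

section Coefficients

variable {𝕂 : Type*} [Field 𝕂]

noncomputable def hypergeometric₃F₂Coefficient (a₁ a₂ a₃ b₁ b₂ : 𝕂) (n : ℕ) : 𝕂 :=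
  (ascPochhammer 𝕂 n).eval a₁ * (ascPochhammer 𝕂 n).eval a₂ * (ascPochhammer 𝕂 n).eval a₃ /
    ((ascPochhammer 𝕂 n).eval b₁ * (ascPochhammer 𝕂 n).eval b₂ * (n.factorial : 𝕂))

@[simp]
theorem hypergeometric₃F₂Coefficient_zero (a₁ a₂ a₃ b₁ b₂ : 𝕂) :
    hypergeometric₃F₂Coefficient a₁ a₂ a₃ b₁ b₂ 0 = 1 := by
  simp [hypergeometric₃F₂Coefficient]

variable [CharZero 𝕂]

theorem ordinaryHypergeometricCoefficient_succ {a b c : 𝕂} {n : ℕ} (hc : c + n ≠ 0) :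
    (c + n) * (n + 1) * ordinaryHypergeometricCoefficient a b c (n + 1) =
      (a + n) * (b + n) * ordinaryHypergeometricCoefficient a b c n := by
  simp only [ordinaryHypergeometricCoefficient, ascPochhammer_succ_eval, Nat.factorial_succ,
    Nat.cast_mul, Nat.cast_succ]
  field_simp

theorem hypergeometric₃F₂Coefficient_succ {a₁ a₂ a₃ b₁ b₂ : 𝕂} {n : ℕ} (hb₁ : b₁ + n ≠ 0)
    (hb₂ : b₂ + n ≠ 0) :
    (b₁ + n) * (b₂ + n) * (n + 1) * hypergeometric₃F₂Coefficient a₁ a₂ a₃ b₁ b₂ (n + 1) =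
      (a₁ + n) * (a₂ + n) * (a₃ + n) * hypergeometric₃F₂Coefficient a₁ a₂ a₃ b₁ b₂ n := by
  simp only [hypergeometric₃F₂Coefficient, ascPochhammer_succ_eval, Nat.factorial_succ,
    Nat.cast_mul, Nat.cast_succ]
  generalize (ascPochhammer 𝕂 n).eval a₁ = p₁, (ascPochhammer 𝕂 n).eval a₂ = p₂,
    (ascPochhammer 𝕂 n).eval a₃ = p₃, (ascPochhammer 𝕂 n).eval b₁ = q₁,
    (ascPochhammer 𝕂 n).eval b₂ = q₂
  field_simp

theorem sum_range_ordinaryHypergeometricCoefficient_mul {a b : 𝕂}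
    (hc : ∀ n : ℕ, a + b + 1 / 2 ≠ -(n : 𝕂)) (hc' : ∀ n : ℕ, 2 * a + 2 * b ≠ -(n : 𝕂)) (n : ℕ) :
    ∑ k ∈ range (n + 1), ordinaryHypergeometricCoefficient a b (a + b + 1 / 2) k *
        ordinaryHypergeometricCoefficient a b (a + b + 1 / 2) (n - k) =
      hypergeometric₃F₂Coefficient (2 * a) (a + b) (2 * b) (a + b + 1 / 2) (2 * a + 2 * b) n := by
  have hne {c : 𝕂} (h : ∀ n : ℕ, c ≠ -(n : 𝕂)) (n : ℕ) : c + n ≠ 0 :=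
    fun h₀ => h n (eq_neg_of_add_eq_zero_left h₀)
  have hrec := clausen_convolution_recurrence (by ring)
    (fun k => ordinaryHypergeometricCoefficient_succ (a := a) (b := b) (hne hc k))
  induction n with
  | zero => simp [ordinaryHypergeometricCoefficient]
  | succ n ih =>
    refine mul_left_cancel₀ (mul_ne_zero (mul_ne_zero (hne hc n) (hne hc' n))
      (Nat.cast_add_one_ne_zero n)) ?_
    rw [hrec, ih, hypergeometric₃F₂Coefficient_succ (hne hc n) (hne hc' n)]

end Coefficients

section Analytic

variable {𝕂 : Type*} [RCLike 𝕂]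

theorem one_le_radius_ordinaryHypergeometricSeries {a b c : 𝕂} (hc : ∀ n : ℕ, c ≠ -(n : 𝕂)) :
    1 ≤ (ordinaryHypergeometricSeries 𝕂 a b c).radius := by
  by_cases hab : ∀ n : ℕ, (n : 𝕂) ≠ -a ∧ (n : 𝕂) ≠ -b
  · exact (ordinaryHypergeometricSeries_radius_eq_one 𝕂 a b c
      fun n => ⟨(hab n).1, (hab n).2, fun h => hc n (by rw [h, neg_neg])⟩).ge
  · obtain ⟨n, hn⟩ := not_forall.mp hab
    rcases not_and_or.mp hn with ha | hb
    · rw [neg_eq_iff_eq_neg.mp (not_not.mp ha).symm,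
        ordinaryHypergeometric_radius_top_of_neg_nat₁]
      exact le_top
    · rw [neg_eq_iff_eq_neg.mp (not_not.mp hb).symm,
        ordinaryHypergeometric_radius_top_of_neg_nat₂]
      exact le_top

theorem summable_norm_ordinaryHypergeometricCoefficient_mul_pow {a b c x : 𝕂}
    (hc : ∀ n : ℕ, c ≠ -(n : 𝕂)) (hx : ‖x‖ < 1) :
    Summable fun n => ‖ordinaryHypergeometricCoefficient a b c n * x ^ n‖ := by
  have hmem : x ∈ Metric.eball (0 : 𝕂) (ordinaryHypergeometricSeries 𝕂 a b c).radius := by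
    rw [mem_eball_zero_iff, ← ofReal_norm]
    exact (ENNReal.ofReal_lt_one.mpr hx).trans_le (one_le_radius_ordinaryHypergeometricSeries hc)
  simpa only [ordinaryHypergeometricSeries_apply_eq, smul_eq_mul] using
    (ordinaryHypergeometricSeries 𝕂 a b c).summable_norm_apply hmem

theorem ordinaryHypergeometric_sq {a b x : 𝕂} (hx : ‖x‖ < 1)
    (hc : ∀ n : ℕ, a + b + 1 / 2 ≠ -(n : 𝕂)) (hc' : ∀ n : ℕ, 2 * a + 2 * b ≠ -(n : 𝕂)) :
    ₂F₁ a b (a + b + 1 / 2) x ^ 2 = ∑' n, hypergeometric₃F₂Coefficient (2 * a) (a + b) (2 * b)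
      (a + b + 1 / 2) (2 * a + 2 * b) n * x ^ n := by
  have hsum := summable_norm_ordinaryHypergeometricCoefficient_mul_pow (a := a) (b := b) hc hx
  simp only [ordinaryHypergeometric_eq_tsum, smul_eq_mul]
  rw [sq, tsum_mul_tsum_eq_tsum_sum_range_of_summable_norm hsum hsum]
  refine tsum_congr fun n => ?_
  rw [← sum_range_ordinaryHypergeometricCoefficient_mul hc hc', sum_mul]
  refine sum_congr rfl fun k hk => ?_
  rw [← pow_mul_pow_sub x (Nat.lt_succ_iff.mp (mem_range.mp hk))]
  ring

end Analytic

/-- Clausen's formula: `(₂F₁(a, b; a+b+1/2; x))² = ₃F₂(2a, a+b, 2b; a+b+1/2, 2a+2b; x)`. -/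
theorem stmt_16 (a b x : ℝ) (hx : |x| < 1)
    (hc : ∀ n : ℕ, a + b + 1 / 2 ≠ -(n : ℝ)) (hc' : ∀ n : ℕ, 2 * a + 2 * b ≠ -(n : ℝ)) :
    (∑' k : ℕ, (ascPochhammer ℝ k).eval a * (ascPochhammer ℝ k).eval b /
        ((ascPochhammer ℝ k).eval (a + b + 1 / 2) * (k.factorial : ℝ)) * x ^ k) ^ 2 =
      ∑' k : ℕ, (ascPochhammer ℝ k).eval (2 * a) * (ascPochhammer ℝ k).eval (a + b) *
          (ascPochhammer ℝ k).eval (2 * b) /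
        ((ascPochhammer ℝ k).eval (a + b + 1 / 2) * (ascPochhammer ℝ k).eval (2 * a + 2 * b) *
          (k.factorial : ℝ)) * x ^ k := by
  refine (congrArg (· ^ 2) ?_).trans (ordinaryHypergeometric_sq (Real.norm_eq_abs x ▸ hx) hc hc')
  rw [ordinaryHypergeometric_eq_tsum]
  exact tsum_congr fun k => by rw [smul_eq_mul]; ring
end
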